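/- Let N be an odd unitary super perfect number with N ≠ 9 and N ≠ 165, and write σ*(N) = 2^{f₁} · q^{f₂} with q an odd prime, q ≠ 3, and f₁, f₂ positive integers. Then q ≤ 13; furthermore, if f₂ ≥ 2, then q = 5 or q = 7. -/

import Mathlib

/-- The sum of the unitary divisors of `n` (divisors `d` of `n` with `gcd(d, n/d) = 1`). -/
def usigma (n : ℕ) : ℕ := ∑ d ∈ n.divisors.filter (fun d => Nat.Coprime d (n / d)), d

/-!
Since `σ*` is multiplicative with `σ*(p^e) = p^e + 1`, every component `p^e` of `N` satisfies
`p^e + 1 ∣ σ*(N) = 2^f₁ q^f₂`, so `p^e = 2^a q^b - 1` with `a ≥ 1` and pairwise distinct exponent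
pairs `(a, b)`; the equation `σ*(σ*(N)) = 2N` becomes
`(1 + 2^-f₁) (1 + q^-f₂) = 2 ∏ (1 - 2^-a q^-b)`.
Components with `b = 0` are Mersenne prime powers `2^a - 1`, which forces `a ∈ {2, 3, 5}` or
`a ≥ 7`; the components with `b > 0` have `∑ 2^-a q^-b ≤ ∑_{a, b ≥ 1} 2^-a q^-b = 1 / (q - 1)`.
Bounding the product below by `(1 - ∑_{b = 0}) (1 - ∑_{b > 0})` makes the right-hand side too
large as soon as `q ≥ 17`, or `q ≥ 11` and `f₂ ≥ 2`.
-/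

open Finset

theorem Nat.Coprime.coprime_mul_div_mul_iff {m n d e : ℕ} (hmn : m.Coprime n) (hd : d ∣ m)
    (he : e ∣ n) :
    (d * e).Coprime (m * n / (d * e)) ↔ d.Coprime (m / d) ∧ e.Coprime (n / e) := by
  have hdn : d.Coprime (n / e) :=
    (hmn.coprime_dvd_left hd).coprime_dvd_right (Nat.div_dvd_of_dvd he)
  have hem : e.Coprime (m / d) :=
    (hmn.symm.coprime_dvd_left he).coprime_dvd_right (Nat.div_dvd_of_dvd hd)
  rw [← Nat.div_mul_div_comm hd he, Nat.coprime_mul_iff_left, Nat.coprime_mul_iff_right,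
    Nat.coprime_mul_iff_right]
  tauto

theorem usigma_mul_of_coprime {m n : ℕ} (hmn : m.Coprime n) :
    usigma (m * n) = usigma m * usigma n := by
  simp only [usigma, sum_filter, sum_mul_sum, ← sum_product']
  rw [Nat.divisors_mul, Finset.mul_def, sum_image hmn.mul_injOn_divisors]
  refine sum_congr rfl fun x hx => ?_
  rw [mem_product, Nat.mem_divisors, Nat.mem_divisors] at hx
  simp only [hmn.coprime_mul_div_mul_iff hx.1.1 hx.2.1, ite_zero_mul_ite_zero]

theorem usigma_apply_prime_pow {p k : ℕ} (hp : p.Prime) (hk : k ≠ 0) :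
    usigma (p ^ k) = p ^ k + 1 := by
  have hunit : (p ^ k).divisors.filter (fun d => d.Coprime (p ^ k / d)) = {p ^ k, 1} := by
    ext d
    simp only [mem_filter, Nat.mem_divisors_prime_pow hp, mem_insert, mem_singleton]
    constructor
    · rintro ⟨⟨i, hik, rfl⟩, hcop⟩
      rw [Nat.pow_div hik hp.pos] at hcop
      by_contra! h
      refine Nat.not_coprime_of_dvd_of_dvd hp.one_lt (dvd_pow_self p ?_) (dvd_pow_self p ?_) hcop
      · rintro rfl
        exact h.2 (pow_zero p)
      · have : i ≠ k := by rintro rfl; exact h.1 rfl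
        omega
    · rintro (rfl | rfl)
      · refine ⟨⟨k, le_rfl, rfl⟩, ?_⟩
        rw [Nat.div_self (pow_pos hp.pos k)]
        exact Nat.coprime_one_right _
      · exact ⟨⟨0, k.zero_le, (pow_zero p).symm⟩, Nat.coprime_one_left _⟩
  rw [usigma, hunit, sum_pair (Nat.one_lt_pow hk hp.one_lt).ne']

theorem usigma_eq_prod_primeFactors {n : ℕ} (hn : n ≠ 0) :
    usigma n = ∏ p ∈ n.primeFactors, (p ^ n.factorization p + 1) := by
  rw [Nat.multiplicative_factorization usigma (fun _ _ => usigma_mul_of_coprime) rfl hn,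
    Nat.prod_factorization_eq_prod_primeFactors]
  exact prod_congr rfl fun p hp =>
    usigma_apply_prime_pow (Nat.prime_of_mem_primeFactors hp) (Finsupp.mem_support_iff.1 hp)

theorem exists_eq_two_pow_mul_pow_of_dvd {d q m n : ℕ} (hq : q.Prime) (h : d ∣ 2 ^ m * q ^ n) :
    ∃ x : ℕ × ℕ, d = 2 ^ x.1 * q ^ x.2 := by
  obtain ⟨d₁, d₂, h₁, h₂, rfl⟩ := Nat.dvd_mul.1 h
  obtain ⟨a, -, rfl⟩ := (Nat.dvd_prime_pow Nat.prime_two).1 h₁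
  obtain ⟨b, -, rfl⟩ := (Nat.dvd_prime_pow hq).1 h₂
  exact ⟨(a, b), rfl⟩

theorem padicValNat_two_pow_mul_pow {q : ℕ} (hq : Odd q) (a b : ℕ) :
    padicValNat 2 (2 ^ a * q ^ b) = a := by
  rw [padicValNat.mul (by positivity) (pow_ne_zero b hq.pos.ne'), padicValNat.prime_pow,
    padicValNat.eq_zero_of_not_dvd hq.pow.not_two_dvd_nat, add_zero]

theorem eq_and_eq_of_two_pow_mul_pow_eq {q a b c d : ℕ} (hq : Odd q) (hq1 : 1 < q)
    (h : 2 ^ a * q ^ b = 2 ^ c * q ^ d) : a = c ∧ b = d := by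
  obtain rfl : a = c := by
    rw [← padicValNat_two_pow_mul_pow hq a b, h, padicValNat_two_pow_mul_pow hq]
  exact ⟨rfl, Nat.pow_right_injective hq1 (Nat.eq_of_mul_eq_mul_left (by positivity) h)⟩

theorem pos_of_odd_add_one_eq_two_pow_mul_pow {m q a b : ℕ} (hm : Odd m) (hq : Odd q)
    (h : m + 1 = 2 ^ a * q ^ b) : 0 < a := by
  refine Nat.pos_of_ne_zero fun ha => ?_
  rw [ha, pow_zero, one_mul] at h
  exact Nat.not_even_iff_odd.2 hq.pow (h ▸ hm.add_one)

theorem exists_exponents_of_usigma_eq {N q f₁ f₂ : ℕ} (hN : Odd N) (hq : q.Prime)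
    (hqodd : Odd q) (h : usigma N = 2 ^ f₁ * q ^ f₂) :
    ∃ T : Finset (ℕ × ℕ), (∀ x ∈ T, 0 < x.1 ∧ IsPrimePow (2 ^ x.1 * q ^ x.2 - 1)) ∧
      ∑ x ∈ T, x.1 = f₁ ∧ ∑ x ∈ T, x.2 = f₂ ∧ ∏ x ∈ T, (2 ^ x.1 * q ^ x.2 - 1) = N := by
  have hN0 : N ≠ 0 := hN.pos.ne'
  have hprod : ∏ p ∈ N.primeFactors, (p ^ N.factorization p + 1) = 2 ^ f₁ * q ^ f₂ :=
    (usigma_eq_prod_primeFactors hN0).symm.trans h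
  choose! g hg using fun p (hp : p ∈ N.primeFactors) =>
    exists_eq_two_pow_mul_pow_of_dvd hq (hprod ▸ dvd_prod_of_mem _ hp)
  have hpow : ∀ p ∈ N.primeFactors, 2 ^ (g p).1 * q ^ (g p).2 - 1 = p ^ N.factorization p :=
    fun p hp => by rw [← hg p hp, Nat.add_sub_cancel]
  have hinj : Set.InjOn g N.primeFactors := fun p hp p' hp' hpp' =>
    ((Nat.prime_of_mem_primeFactors hp).pow_inj' (Nat.prime_of_mem_primeFactors hp')
      (Finsupp.mem_support_iff.1 hp) (Finsupp.mem_support_iff.1 hp')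
      (by rw [← hpow p hp, ← hpow p' hp', hpp'])).1
  obtain ⟨h₁, h₂⟩ : ∑ x ∈ N.primeFactors.image g, x.1 = f₁ ∧
      ∑ x ∈ N.primeFactors.image g, x.2 = f₂ := by
    refine eq_and_eq_of_two_pow_mul_pow_eq hqodd hq.one_lt ?_
    rw [← prod_pow_eq_pow_sum, ← prod_pow_eq_pow_sum, ← prod_mul_distrib, prod_image hinj,
      ← hprod]
    exact prod_congr rfl fun p hp => (hg p hp).symm
  refine ⟨N.primeFactors.image g, ?_, h₁, h₂, ?_⟩
  · simp only [mem_image, forall_exists_index, and_imp, forall_apply_eq_imp_iff₂]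
    intro p hp
    exact ⟨pos_of_odd_add_one_eq_two_pow_mul_pow
        (hN.of_dvd_nat (Nat.dvd_of_mem_primeFactors hp)).pow hqodd (hg p hp),
      hpow p hp ▸ (Nat.prime_of_mem_primeFactors hp).isPrimePow.pow
        (Finsupp.mem_support_iff.1 hp)⟩
  · rw [prod_image hinj, prod_congr rfl hpow, ← Nat.prod_factorization_eq_prod_primeFactors,
      Nat.prod_factorization_pow_eq_self hN0]

theorem one_sub_sum_le_prod_one_sub {ι R : Type*} [CommRing R] [LinearOrder R]
    [IsStrictOrderedRing R] {s : Finset ι} {f : ι → R} (h0 : ∀ i ∈ s, 0 ≤ f i)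
    (h1 : ∀ i ∈ s, f i ≤ 1) : 1 - ∑ i ∈ s, f i ≤ ∏ i ∈ s, (1 - f i) := by
  classical
  induction s using Finset.induction_on with
  | empty => simp
  | insert a s ha ih =>
    rw [sum_insert ha, prod_insert ha]
    have ih' := ih (fun i hi => h0 i (mem_insert_of_mem hi))
      fun i hi => h1 i (mem_insert_of_mem hi)
    have hfa := h1 a (mem_insert_self a s)
    have : 0 ≤ f a * ∑ i ∈ s, f i := mul_nonneg (h0 a (mem_insert_self a s))
      (sum_nonneg fun i hi => h0 i (mem_insert_of_mem hi))
    nlinarith [mul_le_mul_of_nonneg_left ih' (sub_nonneg.2 hfa)]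

theorem sum_pow_le_of_forall_le {K : Type*} [Field K] [LinearOrder K] [IsStrictOrderedRing K]
    {x : K} {s : Finset ℕ} {k : ℕ} (hx0 : 0 ≤ x) (hx1 : x < 1) (hs : ∀ i ∈ s, k ≤ i) :
    ∑ i ∈ s, x ^ i ≤ x ^ k / (1 - x) :=
  calc ∑ i ∈ s, x ^ i ≤ ∑ i ∈ Ico k (s.sup id + 1), x ^ i :=
        sum_le_sum_of_subset_of_nonneg
          (fun i hi => mem_Ico.2 ⟨hs i hi, Nat.lt_succ_of_le (le_sup (f := id) hi)⟩)
          fun _ _ _ => pow_nonneg hx0 _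
    _ ≤ x ^ k / (1 - x) := geom_sum_Ico_le_of_lt_one hx0 hx1

theorem sum_inv_two_pow_mul_inv_pow_le {q : ℝ} (hq : 1 < q) {B : Finset (ℕ × ℕ)}
    (hB : ∀ x ∈ B, 0 < x.1 ∧ 0 < x.2) :
    ∑ x ∈ B, (2 : ℝ)⁻¹ ^ x.1 * q⁻¹ ^ x.2 ≤ (q - 1)⁻¹ := by
  have hq0 : 0 ≤ q⁻¹ := inv_nonneg.2 (by linarith)
  have hq1 : q⁻¹ < 1 := inv_lt_one_of_one_lt₀ hq
  calc ∑ x ∈ B, (2 : ℝ)⁻¹ ^ x.1 * q⁻¹ ^ x.2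
      ≤ ∑ x ∈ B.image Prod.fst ×ˢ B.image Prod.snd, (2 : ℝ)⁻¹ ^ x.1 * q⁻¹ ^ x.2 :=
        sum_le_sum_of_subset_of_nonneg
          (fun x hx => mem_product.2 ⟨mem_image_of_mem _ hx, mem_image_of_mem _ hx⟩)
          fun _ _ _ => by positivity
    _ = (∑ a ∈ B.image Prod.fst, (2 : ℝ)⁻¹ ^ a) * ∑ b ∈ B.image Prod.snd, q⁻¹ ^ b := by
        rw [sum_product, sum_mul_sum]
    _ ≤ ((2 : ℝ)⁻¹ ^ 1 / (1 - 2⁻¹)) * (q⁻¹ ^ 1 / (1 - q⁻¹)) := by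
        refine mul_le_mul (sum_pow_le_of_forall_le (by norm_num) (by norm_num) fun a ha => ?_)
          (sum_pow_le_of_forall_le hq0 hq1 fun b hb => ?_)
          (sum_nonneg fun _ _ => by positivity) (by norm_num)
        · obtain ⟨x, hx, rfl⟩ := mem_image.1 ha
          exact (hB x hx).1
        · obtain ⟨x, hx, rfl⟩ := mem_image.1 hb
          exact (hB x hx).2
    _ = (q - 1)⁻¹ := by
        have : q - 1 ≠ 0 := by linarith
        field_simp
        ring

theorem IsPrimePow.eq_of_prime_dvd {n p r : ℕ} (h : IsPrimePow n) (hp : p.Prime)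
    (hr : r.Prime) (hpn : p ∣ n) (hrn : r ∣ n) : p = r :=
  (isPrimePow_iff_unique_prime_dvd.1 h).unique ⟨hp, hpn⟩ ⟨hr, hrn⟩

theorem mem_or_seven_le_of_isPrimePow_mersenne {a : ℕ} (h : IsPrimePow (mersenne a)) :
    a ∈ ({2, 3, 5} : Finset ℕ) ∨ 7 ≤ a := by
  by_contra! ha
  obtain ⟨ha, ha7⟩ := ha
  simp only [mem_insert, mem_singleton] at ha
  interval_cases a
  · exact not_isPrimePow_zero h
  · exact not_isPrimePow_one h
  · simp at ha
  · simp at ha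
  · exact absurd (h.eq_of_prime_dvd (p := 3) (r := 5) (by norm_num) (by norm_num)
      (by norm_num [mersenne]) (by norm_num [mersenne])) (by norm_num)
  · simp at ha
  · exact absurd (h.eq_of_prime_dvd (p := 3) (r := 7) (by norm_num) (by norm_num)
      (by norm_num [mersenne]) (by norm_num [mersenne])) (by norm_num)

theorem sum_inv_two_pow_le_of_isPrimePow_mersenne {A : Finset ℕ}
    (hA : ∀ a ∈ A, IsPrimePow (mersenne a)) (h2 : 2 ∉ A) :
    ∑ a ∈ A, (2 : ℝ)⁻¹ ^ a ≤ 11 / 64 := by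
  rw [← sum_filter_add_sum_filter_not A (· < 7)]
  have hsmall : ∑ a ∈ A with a < 7, (2 : ℝ)⁻¹ ^ a ≤ ∑ a ∈ {3, 5}, (2 : ℝ)⁻¹ ^ a := by
    refine sum_le_sum_of_subset_of_nonneg (fun a ha => ?_) fun _ _ _ => by positivity
    rw [mem_filter] at ha
    have := mem_or_seven_le_of_isPrimePow_mersenne (hA a ha.1)
    have : a ≠ 2 := fun h => h2 (h ▸ ha.1)
    simp only [mem_insert, mem_singleton] at *
    omega
  have hlarge : ∑ a ∈ A with ¬a < 7, (2 : ℝ)⁻¹ ^ a ≤ 2⁻¹ ^ 7 / (1 - 2⁻¹) :=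
    sum_pow_le_of_forall_le (by norm_num) (by norm_num) fun a ha => not_lt.1 (mem_filter.1 ha).2
  norm_num at hsmall hlarge ⊢
  linarith

-- `65 / 37` is the worst case, attained when `2 ∈ A ≠ {2}` (then `2⁻¹ ^ f ≤ 2⁻⁶` and
-- `∑ a ∈ A, 2⁻¹ ^ a ≤ 1/4 + 11/64`); `one_add_inv_pow_lt` has `74 = 2 * 37` on the other side.
theorem one_add_inv_two_pow_le {A : Finset ℕ} {f : ℕ} (hA : ∀ a ∈ A, IsPrimePow (mersenne a))
    (hf : ∑ a ∈ A, a < f) :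
    37 * (1 + (2 : ℝ)⁻¹ ^ f) ≤ 65 * (1 - ∑ a ∈ A, (2 : ℝ)⁻¹ ^ a) := by
  have hpow : ∀ k ≤ f, (2 : ℝ)⁻¹ ^ f ≤ 2⁻¹ ^ k := fun k hk =>
    pow_le_pow_of_le_one (by norm_num) (by norm_num) hk
  have herase := sum_inv_two_pow_le_of_isPrimePow_mersenne (A := A.erase 2)
    (fun a ha => hA a (mem_of_mem_erase ha)) (notMem_erase 2 A)
  have hthree : (A.erase 2).Nonempty → 3 ≤ ∑ a ∈ A.erase 2, a := fun ⟨a, ha⟩ => by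
    have := mem_or_seven_le_of_isPrimePow_mersenne (hA a (mem_of_mem_erase ha))
    have := ne_of_mem_erase ha
    simp only [mem_insert, mem_singleton] at *
    have : a ≤ ∑ a ∈ A.erase 2, a := single_le_sum (f := id) (fun _ _ => Nat.zero_le _) ha
    omega
  by_cases h2 : 2 ∈ A
  · rw [← add_sum_erase A _ h2] at hf ⊢
    rcases (A.erase 2).eq_empty_or_nonempty with h | h
    · simp only [h, sum_empty, add_zero] at hf ⊢
      have := hpow 3 (by omega)
      norm_num at this ⊢
      linarith
    · have := hpow 6 (by have := hthree h; omega)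
      norm_num at this ⊢
      linarith
  · rw [erase_eq_of_notMem h2] at herase hthree
    rcases A.eq_empty_or_nonempty with h | h
    · simp only [h, sum_empty] at hf ⊢
      have := hpow 1 (by omega)
      norm_num at this ⊢
      linarith
    · have := hpow 4 (by have := hthree h; omega)
      norm_num at this ⊢
      linarith

theorem one_add_inv_pow_lt {q f : ℕ} (hq : 11 ≤ q) (hf : 0 < f) (hlarge : 17 ≤ q ∨ 2 ≤ f) :
    65 * (1 + (q : ℝ)⁻¹ ^ f) < 74 * (1 - ((q : ℝ) - 1)⁻¹) := by
  have hq' : (11 : ℝ) ≤ q := by exact_mod_cast hq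
  have hpow : ∀ k ≤ f, (q : ℝ)⁻¹ ^ f ≤ (q : ℝ)⁻¹ ^ k := fun k hk =>
    pow_le_pow_of_le_one (by positivity) (inv_le_one_of_one_le₀ (by linarith)) hk
  rcases hlarge with h17 | h2
  · have hq' : (17 : ℝ) ≤ q := by exact_mod_cast h17
    have h1 := hpow 1 hf
    have : (q : ℝ)⁻¹ ≤ 17⁻¹ := inv_anti₀ (by norm_num) hq'
    have : ((q : ℝ) - 1)⁻¹ ≤ 16⁻¹ := inv_anti₀ (by norm_num) (by linarith)
    norm_num at *
    linarith
  · have h1 := hpow 2 h2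
    have : (q : ℝ)⁻¹ ^ 2 ≤ 11⁻¹ ^ 2 :=
      pow_le_pow_left₀ (by positivity) (inv_anti₀ (by norm_num) hq') 2
    have : ((q : ℝ) - 1)⁻¹ ≤ 10⁻¹ := inv_anti₀ (by norm_num) (by linarith)
    norm_num at *
    linarith

theorem one_add_inv_pow_mul_one_add_inv_pow_eq {q f₁ f₂ : ℕ} {T : Finset (ℕ × ℕ)} (hq : q ≠ 0)
    (h₁ : ∑ x ∈ T, x.1 = f₁) (h₂ : ∑ x ∈ T, x.2 = f₂)
    (h : (2 ^ f₁ + 1) * (q ^ f₂ + 1) = 2 * ∏ x ∈ T, (2 ^ x.1 * q ^ x.2 - 1)) :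
    (1 + (2 : ℝ)⁻¹ ^ f₁) * (1 + (q : ℝ)⁻¹ ^ f₂) =
      2 * ∏ x ∈ T, (1 - (2 : ℝ)⁻¹ ^ x.1 * (q : ℝ)⁻¹ ^ x.2) := by
  have hC : ∀ x ∈ T, ((2 ^ x.1 * q ^ x.2 - 1 : ℕ) : ℝ) =
      2 ^ x.1 * q ^ x.2 * (1 - (2 : ℝ)⁻¹ ^ x.1 * (q : ℝ)⁻¹ ^ x.2) := fun x _ => by
    rw [Nat.cast_sub (Nat.one_le_iff_ne_zero.2 (by positivity))]
    push_cast
    rw [inv_pow, inv_pow]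
    field_simp
  have hR := congrArg (Nat.cast : ℕ → ℝ) h
  simp only [Nat.cast_mul, Nat.cast_prod] at hR
  rw [prod_congr rfl hC, prod_mul_distrib, prod_mul_distrib,
    prod_pow_eq_pow_sum, prod_pow_eq_pow_sum, h₁, h₂] at hR
  push_cast at hR
  have hX : (2 : ℝ) ^ f₁ ≠ 0 := by positivity
  have hY : (q : ℝ) ^ f₂ ≠ 0 := by positivity
  set P := ∏ x ∈ T, (1 - (2 : ℝ)⁻¹ ^ x.1 * (q : ℝ)⁻¹ ^ x.2)
  rw [inv_pow, inv_pow]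
  field_simp
  linear_combination hR

def mersenneExponents (T : Finset (ℕ × ℕ)) : Finset ℕ :=
  (T.filter (·.2 = 0)).image Prod.fst

theorem sum_mersenneExponents {M : Type*} [AddCommMonoid M] (T : Finset (ℕ × ℕ)) (f : ℕ → M) :
    ∑ a ∈ mersenneExponents T, f a = ∑ x ∈ T with x.2 = 0, f x.1 := by
  refine sum_image fun x hx y hy hxy => Prod.ext hxy ?_
  simp only [coe_filter, Set.mem_ofPred_eq] at hx hy
  exact hx.2.trans hy.2.symm

theorem two_mul_le_one_add_inv_pow_mul_one_add_inv_pow {q f₁ f₂ : ℕ} {T : Finset (ℕ × ℕ)}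
    (hq : 1 < q) (hT : ∀ x ∈ T, 0 < x.1) (h₁ : ∑ x ∈ T, x.1 = f₁) (h₂ : ∑ x ∈ T, x.2 = f₂)
    (h : (2 ^ f₁ + 1) * (q ^ f₂ + 1) = 2 * ∏ x ∈ T, (2 ^ x.1 * q ^ x.2 - 1)) :
    2 * ((1 - ∑ a ∈ mersenneExponents T, (2 : ℝ)⁻¹ ^ a) * (1 - ((q : ℝ) - 1)⁻¹)) ≤
      (1 + (2 : ℝ)⁻¹ ^ f₁) * (1 + (q : ℝ)⁻¹ ^ f₂) := by
  set w : ℕ × ℕ → ℝ := fun x => (2 : ℝ)⁻¹ ^ x.1 * (q : ℝ)⁻¹ ^ x.2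
  have hq' : (1 : ℝ) < q := by exact_mod_cast hq
  have hw : ∀ x ∈ T, 0 ≤ w x ∧ w x ≤ 1 := fun x _ =>
    ⟨by positivity, mul_le_one₀ (pow_le_one₀ (by norm_num) (by norm_num)) (by positivity)
      (pow_le_one₀ (by positivity) (inv_le_one_of_one_le₀ hq'.le))⟩
  have hs : ∑ a ∈ mersenneExponents T, (2 : ℝ)⁻¹ ^ a = ∑ x ∈ T with x.2 = 0, w x := by
    rw [sum_mersenneExponents]
    exact sum_congr rfl fun x hx => by simp [w, (mem_filter.1 hx).2]
  have hs1 : ∑ a ∈ mersenneExponents T, (2 : ℝ)⁻¹ ^ a ≤ 1 := by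
    refine (sum_pow_le_of_forall_le (k := 1) (by norm_num) (by norm_num) fun a ha => ?_).trans
      (by norm_num)
    obtain ⟨x, hx, rfl⟩ := mem_image.1 ha
    exact hT x (mem_filter.1 hx).1
  have ht : ∑ x ∈ T with ¬x.2 = 0, w x ≤ ((q : ℝ) - 1)⁻¹ :=
    sum_inv_two_pow_mul_inv_pow_le hq' fun x hx =>
      ⟨hT x (mem_filter.1 hx).1, Nat.pos_of_ne_zero (mem_filter.1 hx).2⟩
  have ht1 : ((q : ℝ) - 1)⁻¹ ≤ 1 :=
    inv_le_one_of_one_le₀ (by linarith [show (2 : ℝ) ≤ q by exact_mod_cast hq])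
  rw [one_add_inv_pow_mul_one_add_inv_pow_eq (by omega) h₁ h₂ h,
    ← prod_filter_mul_prod_filter_not T (·.2 = 0)]
  gcongr 2 * ?_
  calc (1 - ∑ a ∈ mersenneExponents T, (2 : ℝ)⁻¹ ^ a) * (1 - ((q : ℝ) - 1)⁻¹)
      ≤ (1 - ∑ x ∈ T with x.2 = 0, w x) * (1 - ∑ x ∈ T with ¬x.2 = 0, w x) := by
        rw [hs] at hs1 ⊢
        gcongr
    _ ≤ _ := mul_le_mul
        (one_sub_sum_le_prod_one_sub (fun x hx => (hw x (mem_filter.1 hx).1).1)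
          fun x hx => (hw x (mem_filter.1 hx).1).2)
        (one_sub_sum_le_prod_one_sub (fun x hx => (hw x (mem_filter.1 hx).1).1)
          fun x hx => (hw x (mem_filter.1 hx).1).2)
        (by linarith) (prod_nonneg fun x hx => sub_nonneg.2 (hw x (mem_filter.1 hx).1).2)

theorem lt_eleven_or_lt_seventeen_and_eq_one {q f₁ f₂ : ℕ} {T : Finset (ℕ × ℕ)}
    (hf₂ : 0 < f₂) (hT : ∀ x ∈ T, 0 < x.1 ∧ IsPrimePow (2 ^ x.1 * q ^ x.2 - 1))
    (h₁ : ∑ x ∈ T, x.1 = f₁) (h₂ : ∑ x ∈ T, x.2 = f₂)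
    (h : (2 ^ f₁ + 1) * (q ^ f₂ + 1) = 2 * ∏ x ∈ T, (2 ^ x.1 * q ^ x.2 - 1)) :
    q < 11 ∨ (q < 17 ∧ f₂ = 1) := by
  by_contra! hlarge
  have hA : ∀ a ∈ mersenneExponents T, IsPrimePow (mersenne a) := by
    simp only [mersenneExponents, mem_image, mem_filter]
    rintro _ ⟨x, ⟨hx, hx2⟩, rfl⟩
    simpa [hx2, mersenne] using (hT x hx).2
  have hfA : ∑ a ∈ mersenneExponents T, a < f₁ := by
    obtain ⟨x, hx, hx2⟩ := exists_ne_zero_of_sum_ne_zero (h₂.trans_ne hf₂.ne')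
    have h1 : x.1 ≤ ∑ y ∈ T with ¬y.2 = 0, y.1 :=
      single_le_sum (f := Prod.fst) (fun _ _ => Nat.zero_le _) (mem_filter.2 ⟨hx, hx2⟩)
    have := (hT x hx).1
    rw [sum_mersenneExponents, ← h₁, ← sum_filter_add_sum_filter_not T (·.2 = 0)]
    omega
  have key := two_mul_le_one_add_inv_pow_mul_one_add_inv_pow (by omega)
    (fun x hx => (hT x hx).1) h₁ h₂ h
  have hX := one_add_inv_two_pow_le hA hfA
  have hY := one_add_inv_pow_lt hlarge.1 hf₂ (by omega)
  have hu : (0 : ℝ) ≤ 2⁻¹ ^ f₁ := by positivity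
  have hv : (0 : ℝ) ≤ (q : ℝ)⁻¹ ^ f₂ := by positivity
  nlinarith [mul_le_mul_of_nonneg_right hX (by linarith : (0 : ℝ) ≤ 1 + (q : ℝ)⁻¹ ^ f₂),
    mul_lt_mul_of_pos_left hY
      (by linarith : (0 : ℝ) < 1 - ∑ a ∈ mersenneExponents T, 2⁻¹ ^ a)]

theorem usp_q_le_thirteen_general (N : ℕ) (hodd : Odd N)
    (husp : usigma (usigma N) = 2 * N)
    (q f₁ f₂ : ℕ) (hq : q.Prime) (hqodd : Odd q) (hq3 : q ≠ 3)
    (hf₁ : 0 < f₁) (hf₂ : 0 < f₂) (hsig : usigma N = 2 ^ f₁ * q ^ f₂) :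
    q ≤ 13 ∧ (2 ≤ f₂ → q = 5 ∨ q = 7) := by
  obtain ⟨T, hT, h₁, h₂, hN⟩ := exists_exponents_of_usigma_eq hodd hq hqodd hsig
  have h : (2 ^ f₁ + 1) * (q ^ f₂ + 1) = 2 * ∏ x ∈ T, (2 ^ x.1 * q ^ x.2 - 1) := by
    rw [hN, ← husp, hsig, usigma_mul_of_coprime ((Nat.coprime_two_left.2 hqodd).pow f₁ f₂),
      usigma_apply_prime_pow Nat.prime_two hf₁.ne', usigma_apply_prime_pow hq hf₂.ne']
  rcases lt_eleven_or_lt_seventeen_and_eq_one hf₂ hT h₁ h₂ h with h11 | ⟨h17, hf₂1⟩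
  · refine ⟨by omega, fun _ => ?_⟩
    interval_cases q <;> first | omega | (norm_num at hq; done) | norm_num at hqodd
  · refine ⟨?_, by omega⟩
    by_contra!
    interval_cases q <;> norm_num at hq

/-- Let `N ≠ 9, 165` be an odd USP with `σ*(N) = 2^f₁ * q^f₂`, `q` an odd prime, `q ≠ 3`,
and `f₁, f₂` positive. Then `q ≤ 13`; furthermore, if `f₂ ≥ 2`, then `q = 5` or `q = 7`. -/
theorem usp_q_le_thirteen (N : ℕ) (hpos : 0 < N) (hodd : Odd N)
    (husp : usigma (usigma N) = 2 * N) (h9 : N ≠ 9) (h165 : N ≠ 165)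
    (q f₁ f₂ : ℕ) (hq : q.Prime) (hqodd : Odd q) (hq3 : q ≠ 3)
    (hf₁ : 0 < f₁) (hf₂ : 0 < f₂) (hsig : usigma N = 2 ^ f₁ * q ^ f₂) :
    q ≤ 13 ∧ (2 ≤ f₂ → q = 5 ∨ q = 7) :=
  usp_q_le_thirteen_general N hodd husp q f₁ f₂ hq hqodd hq3 hf₁ hf₂ hsig
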